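/- arXiv:1309.1534 — 3 statements merged into one kernel-verified Lean document; each statement's English description precedes it below -/
import Mathlib

section
/- Let U : [0,T] → U(N) be differentiable with U(0) = I, and v₀ ∈ S_{N,K}(ℂ). If h : [0,T] → M(K,K;ℂ) solves h'(t) = -(v₀† U(t)† U'(t) v₀) h(t) with h(0) = I_K, then h(t) is unitary for all t, and V(t) := U(t) v₀ h(t) satisfies the horizontality condition V(t)† V'(t) = 0 and projects onto P(t) = U(t) v₀ v₀† U(t)†. -/
/-!
Since `U(t)` stays unitary, differentiating `U†U = 1` shows that `U†U'` is skew-Hermitian, hence so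
is the generator `A = v₀† U† U' v₀` of the ODE `h' = -A h`. Then `(h†h)' = h†(A + A†)h = 0`, so `h`
stays unitary. Finally `V†V' = h†(v₀†U†U'v₀)h + h†(v₀†U†U v₀)h' = h†A h - h†A h = 0`.
-/

open Matrix

attribute [local instance] Matrix.normedAddCommGroup Matrix.normedSpace

section MatrixCalculus

variable {𝕜 : Type*} [RCLike 𝕜] {l m n : Type*} {t : ℝ}

theorem HasDerivAt.matrix_apply [Fintype n] {f : ℝ → Matrix m n 𝕜} {f' : Matrix m n 𝕜}
    (hf : HasDerivAt f f' t) (i : m) (j : n) :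
    HasDerivAt (fun s => f s i j) (f' i j) t :=
  hasDerivAt_pi.1 (hasDerivAt_pi.1 hf i) j

theorem HasDerivAt.matrix_mul [Fintype m] [Fintype n] {f : ℝ → Matrix l m 𝕜}
    {g : ℝ → Matrix m n 𝕜} {f' : Matrix l m 𝕜} {g' : Matrix m n 𝕜}
    (hf : HasDerivAt f f' t) (hg : HasDerivAt g g' t) :
    HasDerivAt (fun s => f s * g s) (f' * g t + f t * g') t := by
  refine hasDerivAt_pi.2 fun i => hasDerivAt_pi.2 fun j => ?_
  simp only [Matrix.mul_apply, Matrix.add_apply, ← Finset.sum_add_distrib]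
  exact HasDerivAt.fun_sum fun k _ => (hf.matrix_apply i k).mul (hg.matrix_apply k j)

theorem HasDerivAt.matrix_conjTranspose [Fintype m] [Fintype n] {f : ℝ → Matrix m n 𝕜}
    {f' : Matrix m n 𝕜} (hf : HasDerivAt f f' t) : HasDerivAt (fun s => (f s)ᴴ) f'ᴴ t :=
  hasDerivAt_pi.2 fun i => hasDerivAt_pi.2 fun j => (hf.matrix_apply j i).star

end MatrixCalculus

theorem conjTranspose_mul_mul_eq_neg {α m n : Type*} [CommRing α] [StarRing α] [Fintype m]
    {B : Matrix m m α} (hB : Bᴴ = -B) (v : Matrix m n α) :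
    (vᴴ * B * v)ᴴ = -(vᴴ * B * v) := by
  simp only [conjTranspose_mul, conjTranspose_conjTranspose, hB, Matrix.mul_neg, Matrix.neg_mul,
    Matrix.mul_assoc]

section SkewGenerator

variable {𝕜 : Type*} [RCLike 𝕜] {m n : Type*} [Fintype m] [Fintype n]

theorem conjTranspose_conjTranspose_mul_eq_neg_of_hasDerivAt [DecidableEq n] {W : ℝ → Matrix m n 𝕜}
    {W' : Matrix m n 𝕜} {t : ℝ} (hW : ∀ s, (W s)ᴴ * W s = 1) (hW' : HasDerivAt W W' t) :
    ((W t)ᴴ * W')ᴴ = -((W t)ᴴ * W') := by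
  have hconst : HasDerivAt (fun s => (W s)ᴴ * W s) 0 t := by
    rw [funext hW]
    exact hasDerivAt_const t 1
  have hsum : W'ᴴ * W t + (W t)ᴴ * W' = 0 :=
    (hW'.matrix_conjTranspose.matrix_mul hW').unique hconst
  rw [conjTranspose_mul, conjTranspose_conjTranspose, eq_neg_iff_add_eq_zero, hsum]

theorem conjTranspose_mul_self_eq_of_hasDerivAt_eq_neg_mul {h h' : ℝ → Matrix m n 𝕜}
    {A : ℝ → Matrix m m 𝕜} (hh : ∀ s, HasDerivAt h (h' s) s) (hODE : ∀ s, h' s = -(A s * h s))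
    (hA : ∀ s, (A s)ᴴ = -A s) (s r : ℝ) : (h s)ᴴ * h s = (h r)ᴴ * h r := by
  have hderiv : ∀ s, HasDerivAt (fun r => (h r)ᴴ * h r) 0 s := by
    intro s
    convert (hh s).matrix_conjTranspose.matrix_mul (hh s) using 1
    simp only [hODE, conjTranspose_neg, conjTranspose_mul, hA, Matrix.mul_neg, neg_neg,
      Matrix.mul_assoc]
    abel
  exact is_const_of_deriv_eq_zero (fun s => (hderiv s).differentiableAt)
    (fun s => (hderiv s).deriv) s r

end SkewGenerator

theorem horizontal_lift_construction_general {N K : ℕ}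
    (U U' : ℝ → Matrix (Fin N) (Fin N) ℂ)
    (hUdiff : ∀ t, HasDerivAt U (U' t) t)
    (hU : ∀ t, U t ∈ Matrix.unitaryGroup (Fin N) ℂ)
    (v₀ : Matrix (Fin N) (Fin K) ℂ) (hv₀ : v₀ᴴ * v₀ = 1)
    (h h' : ℝ → Matrix (Fin K) (Fin K) ℂ)
    (hhdiff : ∀ t, HasDerivAt h (h' t) t)
    (hODE : ∀ t, h' t = -((v₀ᴴ * (U t)ᴴ * U' t * v₀) * h t))
    (hh0 : h 0 = 1)
    (t : ℝ) :
    (h t)ᴴ * h t = 1 ∧ h t * (h t)ᴴ = 1 ∧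
    (∀ W' : Matrix (Fin N) (Fin K) ℂ,
      HasDerivAt (fun s => U s * v₀ * h s) W' t →
        (U t * v₀ * h t)ᴴ * W' = 0) ∧
    (U t * v₀ * h t) * (U t * v₀ * h t)ᴴ = U t * (v₀ * v₀ᴴ) * (U t)ᴴ := by
  have hUU : ∀ s, (U s)ᴴ * U s = 1 := fun s => mem_unitaryGroup_iff'.mp (hU s)
  have hA : ∀ s, (v₀ᴴ * (U s)ᴴ * U' s * v₀)ᴴ = -(v₀ᴴ * (U s)ᴴ * U' s * v₀) := fun s => by
    simpa only [Matrix.mul_assoc] using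
      conjTranspose_mul_mul_eq_neg
        (conjTranspose_conjTranspose_mul_eq_neg_of_hasDerivAt hUU (hUdiff s)) v₀
  have hUnit : (h t)ᴴ * h t = 1 := by
    rw [conjTranspose_mul_self_eq_of_hasDerivAt_eq_neg_mul hhdiff hODE hA t 0, hh0]
    simp
  have hUnit' : h t * (h t)ᴴ = 1 := mul_eq_one_comm.mp hUnit
  refine ⟨hUnit, hUnit', fun W' hW' => ?_, ?_⟩
  · have hV := ((hUdiff t).matrix_mul (hasDerivAt_const t v₀)).matrix_mul (hhdiff t)
    rw [hW'.unique hV, hODE t]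
    simp only [conjTranspose_mul, Matrix.mul_zero, add_zero, Matrix.mul_add, Matrix.mul_neg,
      Matrix.mul_assoc]
    simp only [← Matrix.mul_assoc (U t)ᴴ, hUU, Matrix.one_mul, ← Matrix.mul_assoc v₀ᴴ v₀, hv₀]
    simp only [Matrix.mul_assoc, add_neg_cancel]
  · simp only [conjTranspose_mul, Matrix.mul_assoc, ← Matrix.mul_assoc (h t), hUnit',
      Matrix.one_mul]

/-- The solution of the ODE `h' = -(v₀† U† U' v₀) h`, `h(0) = 1`, is unitary, and
`V(t) = U(t) v₀ h(t)` is a horizontal lift of `P(t) = U(t) v₀ v₀† U(t)†`. -/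
theorem horizontal_lift_construction {N K : ℕ} (T : ℝ)
    (U U' : ℝ → Matrix (Fin N) (Fin N) ℂ)
    (hUdiff : ∀ t, HasDerivAt U (U' t) t)
    (hU : ∀ t, U t ∈ Matrix.unitaryGroup (Fin N) ℂ)
    (hU0 : U 0 = 1)
    (v₀ : Matrix (Fin N) (Fin K) ℂ) (hv₀ : v₀ᴴ * v₀ = 1)
    (h h' : ℝ → Matrix (Fin K) (Fin K) ℂ)
    (hhdiff : ∀ t, HasDerivAt h (h' t) t)
    (hODE : ∀ t, h' t = -((v₀ᴴ * (U t)ᴴ * U' t * v₀) * h t))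
    (hh0 : h 0 = 1)
    (t : ℝ) (ht : t ∈ Set.Icc 0 T) :
    (h t)ᴴ * h t = 1 ∧ h t * (h t)ᴴ = 1 ∧
    (∀ W' : Matrix (Fin N) (Fin K) ℂ,
      HasDerivAt (fun s => U s * v₀ * h s) W' t →
        (U t * v₀ * h t)ᴴ * W' = 0) ∧
    (U t * v₀ * h t) * (U t * v₀ * h t)ᴴ = U t * (v₀ * v₀ᴴ) * (U t)ᴴ :=
  horizontal_lift_construction_general U U' hUdiff hU v₀ hv₀ h h' hhdiff hODE hh0 t
end

section
/- Uniqueness of horizontal lifts: if V₁ and V₂ are two differentiable curves in S_{N,K}(ℂ) with V₁(0) = V₂(0), V₁(t)V₁(t)† = V₂(t)V₂(t)† for all t, and Vᵢ(t)† Vᵢ'(t) = 0 for all t and i = 1,2, then V₁(t) = V₂(t) for all t. -/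
/-!
The overlap `U t = V₂(t)ᴴ V₁(t)` satisfies `V₁ = V₂ U` because both frames span the range of the
common projection. Since that range is the same for both curves, horizontality of each curve
forces both terms of `U' = V₂'ᴴ V₁ + V₂ᴴ V₁'` to vanish, so `U` is constant, equal to
`U 0 = V₂(0)ᴴ V₂(0) = 1`.
-/

open Matrix

attribute [local instance] Matrix.normedAddCommGroup Matrix.normedSpace

section Algebra

variable {m n p α : Type*} [Fintype m] [Fintype n] [DecidableEq n] [Semiring α] [StarRing α]

theorem Matrix.mul_conjTranspose_mul_of_mul_conjTranspose_eq {V W : Matrix m n α}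
    (hV : Vᴴ * V = 1) (hP : V * Vᴴ = W * Wᴴ) : W * (Wᴴ * V) = V := by
  rw [← Matrix.mul_assoc, ← hP, Matrix.mul_assoc, hV, Matrix.mul_one]

theorem Matrix.conjTranspose_mul_eq_zero_of_mul_conjTranspose_eq {V W : Matrix m n α}
    {X : Matrix m p α} (hW : Wᴴ * W = 1) (hP : V * Vᴴ = W * Wᴴ) (hX : Vᴴ * X = 0) :
    Wᴴ * X = 0 := by
  have hW_adj : (Wᴴ * V) * Vᴴ = Wᴴ := by
    simpa only [conjTranspose_mul, conjTranspose_conjTranspose] using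
      congrArg conjTranspose (mul_conjTranspose_mul_of_mul_conjTranspose_eq hW hP.symm)
  rw [← hW_adj, Matrix.mul_assoc, hX, Matrix.mul_zero]

end Algebra

section Calculus

variable {m n p α : Type*}

theorem Matrix.hasDerivAt_iff [Fintype n] [NormedAddCommGroup α] [NormedSpace ℝ α]
    {A : ℝ → Matrix m n α} {A' : Matrix m n α} {t : ℝ} :
    HasDerivAt A A' t ↔ ∀ i j, HasDerivAt (fun s => A s i j) (A' i j) t :=
  (hasDerivAt_pi (φ := fun s => (A s : m → n → α))).trans (forall_congr' fun _ => hasDerivAt_pi)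

theorem HasDerivAt.matrix_conjTranspose_mul [Fintype m] [Fintype n] [Fintype p] [NormedRing α]
    [NormedAlgebra ℝ α] [StarRing α] [StarModule ℝ α] [ContinuousStar α]
    {A : ℝ → Matrix m n α} {B : ℝ → Matrix m p α} {A' : Matrix m n α} {B' : Matrix m p α} {t : ℝ}
    (hA : HasDerivAt A A' t) (hB : HasDerivAt B B' t) :
    HasDerivAt (fun s => (A s)ᴴ * B s) (A'ᴴ * B t + (A t)ᴴ * B') t := by
  rw [Matrix.hasDerivAt_iff] at hA hB ⊢
  intro i j
  simp only [Matrix.add_apply, mul_apply, conjTranspose_apply, ← Finset.sum_add_distrib]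
  exact HasDerivAt.fun_sum fun k _ => (hA k i).star.mul (hB k j)

end Calculus

theorem horizontal_lift_unique_general {N K : ℕ} (T : ℝ)
    (V₁ V₁' V₂ V₂' : ℝ → Matrix (Fin N) (Fin K) ℂ)
    (hV₁diff : ∀ t, HasDerivAt V₁ (V₁' t) t)
    (hV₂diff : ∀ t, HasDerivAt V₂ (V₂' t) t)
    (hV₁ : ∀ t, (V₁ t)ᴴ * V₁ t = 1)
    (hV₂ : ∀ t, (V₂ t)ᴴ * V₂ t = 1)
    (hproj : ∀ t, V₁ t * (V₁ t)ᴴ = V₂ t * (V₂ t)ᴴ)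
    (hhor₁ : ∀ t, (V₁ t)ᴴ * V₁' t = 0)
    (hhor₂ : ∀ t, (V₂ t)ᴴ * V₂' t = 0)
    (h0 : V₁ 0 = V₂ 0) :
    ∀ t ∈ Set.Icc 0 T, V₁ t = V₂ t := by
  set U : ℝ → Matrix (Fin K) (Fin K) ℂ := fun s => (V₂ s)ᴴ * V₁ s
  have hU' : ∀ s, HasDerivAt U 0 s := fun s => by
    have h₂ : (V₁ s)ᴴ * V₂' s = 0 :=
      conjTranspose_mul_eq_zero_of_mul_conjTranspose_eq (hV₁ s) (hproj s).symm (hhor₂ s)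
    have h₁ : (V₂ s)ᴴ * V₁' s = 0 :=
      conjTranspose_mul_eq_zero_of_mul_conjTranspose_eq (hV₂ s) (hproj s) (hhor₁ s)
    have h₂_adj : (V₂' s)ᴴ * V₁ s = 0 := by
      simpa only [conjTranspose_mul, conjTranspose_conjTranspose, conjTranspose_zero] using
        congrArg conjTranspose h₂
    simpa only [h₁, h₂_adj, add_zero] using (hV₂diff s).matrix_conjTranspose_mul (hV₁diff s)
  have hU_const : ∀ t, U t = U 0 :=
    fun t => is_const_of_deriv_eq_zero (fun s => (hU' s).differentiableAt)
      (fun s => (hU' s).deriv) t 0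
  intro t _
  calc V₁ t = V₂ t * U t :=
        (mul_conjTranspose_mul_of_mul_conjTranspose_eq (hV₁ t) (hproj t)).symm
    _ = V₂ t * U 0 := by rw [hU_const]
    _ = V₂ t := by simp only [U, h0, hV₂, Matrix.mul_one]

/-- Uniqueness of horizontal lifts with the same initial frame and the same projection. -/
theorem horizontal_lift_unique {N K : ℕ} (T : ℝ) (hT : 0 ≤ T)
    (V₁ V₁' V₂ V₂' : ℝ → Matrix (Fin N) (Fin K) ℂ)
    (hV₁diff : ∀ t, HasDerivAt V₁ (V₁' t) t)
    (hV₂diff : ∀ t, HasDerivAt V₂ (V₂' t) t)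
    (hV₁ : ∀ t, (V₁ t)ᴴ * V₁ t = 1)
    (hV₂ : ∀ t, (V₂ t)ᴴ * V₂ t = 1)
    (hproj : ∀ t, V₁ t * (V₁ t)ᴴ = V₂ t * (V₂ t)ᴴ)
    (hhor₁ : ∀ t, (V₁ t)ᴴ * V₁' t = 0)
    (hhor₂ : ∀ t, (V₂ t)ᴴ * V₂' t = 0)
    (h0 : V₁ 0 = V₂ 0) :
    ∀ t ∈ Set.Icc 0 T, V₁ t = V₂ t :=
  horizontal_lift_unique_general T V₁ V₁' V₂ V₂' hV₁diff hV₂diff hV₁ hV₂ hproj hhor₁ hhor₂ h0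
end

section
/- Suppose ψ : [0,T] → ℂ^N satisfies ψ(t) = V(t)φ(t) with V(t) ∈ S_{N,K}(ℂ) horizontal (V†V' = 0) and H(t)V(t) = 0 for all t, where iψ' = Hψ. Then φ'(t) = 0, so φ is constant and ψ(t) = V(t)V(0)†ψ(0). -/
open Matrix

attribute [local instance] Matrix.normedAddCommGroup Matrix.normedSpace

/-!
Differentiating `ψ = Vφ` gives `ψ' = V'φ + Vφ'`; applying `V†` and using `V†V = 1`,
`V†V' = 0` shows `φ' = V†ψ'`. Since `Hψ = HVφ = 0`, the Schrödinger equation forces `ψ' = 0`,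
hence `φ' = 0` and `φ` is constant.
-/

theorem HasDerivAt.mulVec {𝕜 𝔸 : Type*} [NontriviallyNormedField 𝕜] [NormedCommRing 𝔸]
    [NormedAlgebra 𝕜 𝔸] {m n : Type*} [Fintype m] [Fintype n]
    {A : 𝕜 → Matrix m n 𝔸} {A' : Matrix m n 𝔸} {x : 𝕜 → n → 𝔸} {x' : n → 𝔸} {t : 𝕜}
    (hA : HasDerivAt A A' t) (hx : HasDerivAt x x' t) :
    HasDerivAt (fun s => A s *ᵥ x s) (A' *ᵥ x t + A t *ᵥ x') t := by
  refine hasDerivAt_pi.mpr fun i => ?_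
  have hrow : HasDerivAt (fun s => A s i) (A' i) t := hasDerivAt_pi.mp hA i
  have hsum : HasDerivAt (fun s => ∑ j, A s i j * x s j)
      (∑ j, (A' i j * x t j + A t i j * x' j)) t :=
    HasDerivAt.fun_sum fun j _ => (hasDerivAt_pi.mp hrow j).mul (hasDerivAt_pi.mp hx j)
  simpa only [Matrix.mulVec, dotProduct, Pi.add_apply, Finset.sum_add_distrib] using hsum

theorem hasDerivAt_coord_eq_conjTranspose_mulVec_of_horizontal {𝕜 : Type*} [RCLike 𝕜]
    {m n : Type*} [Fintype m] [Fintype n] [DecidableEq n]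
    {V : ℝ → Matrix m n 𝕜} {V' : Matrix m n 𝕜} {ψ : ℝ → m → 𝕜} {ψ' : m → 𝕜}
    {φ : ℝ → n → 𝕜} {φ' : n → 𝕜} {t : ℝ}
    (hψ : HasDerivAt ψ ψ' t) (hV : HasDerivAt V V' t) (hφ : HasDerivAt φ φ' t)
    (horth : (V t)ᴴ * V t = 1) (hhor : (V t)ᴴ * V' = 0) (hψV : ∀ s, ψ s = V s *ᵥ φ s) :
    φ' = (V t)ᴴ *ᵥ ψ' := by
  have hψV' : ψ = fun s => V s *ᵥ φ s := funext hψV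
  have hprod : ψ' = V' *ᵥ φ t + V t *ᵥ φ' := hψ.unique (hψV' ▸ hV.mulVec hφ)
  rw [hprod, mulVec_add, mulVec_mulVec, mulVec_mulVec, hhor, horth, zero_mulVec, one_mulVec,
    zero_add]

theorem horizontal_zero_energy_evolution_general {N K : ℕ}
    (H : ℝ → Matrix (Fin N) (Fin N) ℂ)
    (ψ ψ' : ℝ → Fin N → ℂ)
    (V V' : ℝ → Matrix (Fin N) (Fin K) ℂ)
    (φ φ' : ℝ → Fin K → ℂ)
    (hψdiff : ∀ t, HasDerivAt ψ (ψ' t) t)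
    (hVdiff : ∀ t, HasDerivAt V (V' t) t)
    (hφdiff : ∀ t, HasDerivAt φ (φ' t) t)
    (hSchr : ∀ t, Complex.I • ψ' t = (H t).mulVec (ψ t))
    (hV : ∀ t, (V t)ᴴ * V t = 1)
    (hhor : ∀ t, (V t)ᴴ * V' t = 0)
    (hHV : ∀ t, H t * V t = 0)
    (hφ : ∀ t, φ t = (V t)ᴴ.mulVec (ψ t))
    (hψV : ∀ t, ψ t = (V t).mulVec (φ t)) :
    (∀ t, φ' t = 0) ∧ (∀ t, φ t = φ 0) ∧
      (∀ t, ψ t = (V t).mulVec ((V 0)ᴴ.mulVec (ψ 0))) := by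
  have hψ' : ∀ t, ψ' t = 0 := fun t => by
    have hIψ' : Complex.I • ψ' t = 0 := by
      rw [hSchr t, hψV t, mulVec_mulVec, hHV t, zero_mulVec]
    exact (smul_eq_zero.mp hIψ').resolve_left Complex.I_ne_zero
  have hφ' : ∀ t, φ' t = 0 := fun t => by
    rw [hasDerivAt_coord_eq_conjTranspose_mulVec_of_horizontal (hψdiff t) (hVdiff t) (hφdiff t)
      (hV t) (hhor t) hψV, hψ' t, mulVec_zero]
  have hφconst : ∀ t, φ t = φ 0 := fun t =>
    is_const_of_deriv_eq_zero (fun s => (hφdiff s).differentiableAt)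
      (fun s => (hφdiff s).deriv.trans (hφ' s)) t 0
  exact ⟨hφ', hφconst, fun t => by rw [hψV t, hφconst t, hφ 0]⟩

/-- For adiabatic evolution within the zero-energy eigenspace along a horizontal frame
`V(t)`, the reduced state `φ(t) = V(t)†ψ(t)` is constant, so
`ψ(t) = V(t)V(0)†ψ(0)`. -/
theorem horizontal_zero_energy_evolution {N K : ℕ} (T : ℝ)
    (H : ℝ → Matrix (Fin N) (Fin N) ℂ)
    (ψ ψ' : ℝ → Fin N → ℂ)
    (V V' : ℝ → Matrix (Fin N) (Fin K) ℂ)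
    (φ φ' : ℝ → Fin K → ℂ)
    (hψdiff : ∀ t, HasDerivAt ψ (ψ' t) t)
    (hVdiff : ∀ t, HasDerivAt V (V' t) t)
    (hφdiff : ∀ t, HasDerivAt φ (φ' t) t)
    (hSchr : ∀ t, Complex.I • ψ' t = (H t).mulVec (ψ t))
    (hV : ∀ t, (V t)ᴴ * V t = 1)
    (hhor : ∀ t, (V t)ᴴ * V' t = 0)
    (hHV : ∀ t, H t * V t = 0)
    (hφ : ∀ t, φ t = (V t)ᴴ.mulVec (ψ t))
    (hψV : ∀ t, ψ t = (V t).mulVec (φ t)) :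
    (∀ t, φ' t = 0) ∧ (∀ t, φ t = φ 0) ∧
      (∀ t, ψ t = (V t).mulVec ((V 0)ᴴ.mulVec (ψ 0))) :=
  horizontal_zero_energy_evolution_general H ψ ψ' V V' φ φ' hψdiff hVdiff hφdiff hSchr hV hhor hHV
    hφ hψV
end
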